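/- Monotonic learning nogoods are correct: with the setup of external behavior learning, additionally assume the oracle f is monotonic in the input predicate p, meaning: if f(A, c⃗) = 1 and B is a complete consistent assignment with {a : Ta ∈ A|_p} ⊆ {a : Ta ∈ B|_p}, then f(B, c⃗) = 1. Then for any assignment A and output c⃗ with f(A, c⃗) = 1, every compatible set is a solution to the reduced nogood {Ta ∈ A|_p} ∪ {Fe(c⃗)} (containing only the positive input literals and the negated replacement atom). -/

import Mathlib

/-- A signed literal over atoms `α`: `(a, true)` is **T**a, `(a, false)` is **F**a. -/
abbrev Lit (α : Type) := α × Bool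

/-- Negation of a signed literal (swaps T and F). -/
def Lit.neg {α : Type} (l : Lit α) : Lit α := (l.1, !l.2)

/-- An assignment is consistent if it never contains both Ta and Fa. -/
def Consistent {α : Type} (A : Set (Lit α)) : Prop :=
  ∀ a : α, ¬((a, true) ∈ A ∧ (a, false) ∈ A)

/-- An assignment is complete if every atom gets at least one sign. -/
def Complete {α : Type} (A : Set (Lit α)) : Prop :=
  ∀ a : α, (a, true) ∈ A ∨ (a, false) ∈ A

/-- `A` is a solution to nogood `δ` iff `¬(δ ⊆ A)`. -/
def Solution {α : Type} (A δ : Set (Lit α)) : Prop := ¬ δ ⊆ A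

/-- The true part of the extension of the input predicate (atoms in I). -/
def posP {α : Type} (I : Set α) (A : Set (Lit α)) : Set α :=
  {a ∈ I | (a, true) ∈ A}

lemma posP_subset_posP_of_image_subset {α : Type} {I : Set α} {A B : Set (Lit α)}
    (h : (fun a => ((a, true) : Lit α)) '' posP I A ⊆ B) : posP I A ⊆ posP I B :=
  fun a ha => ⟨ha.1, h ⟨a, ha, rfl⟩⟩

lemma Consistent.solution_of_mem_false {α : Type} {B δ : Set (Lit α)} (hB : Consistent B)
    {a : α} (hT : (a, true) ∈ B) (hF : (a, false) ∈ δ) : Solution B δ :=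
  fun hδ => hB a ⟨hT, hδ hF⟩

theorem monotonic_ebl_correct_general {α β : Type} (I : Set α) (e : β → α)
    (f : Set (Lit α) → β → Bool)
    (hmono : ∀ (A B : Set (Lit α)) (c : β), f A c = true →
      Complete B → Consistent B → posP I A ⊆ posP I B → f B c = true)
    (Compatible : Set (Lit α) → Prop)
    (hCompat : ∀ B, Compatible B ↔
      (Complete B ∧ Consistent B ∧ ∀ c : β, (f B c = true ↔ (e c, true) ∈ B)))
    (A : Set (Lit α)) (c : β) (hf : f A c = true) :
    ∀ B, Compatible B →
      Solution B ((fun a => ((a, true) : Lit α)) '' posP I A ∪ {(e c, false)}) := by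
  intro B hB hsub
  obtain ⟨hBcomplete, hBcons, hBcompat⟩ := (hCompat B).mp hB
  have hpos : posP I A ⊆ posP I B :=
    posP_subset_posP_of_image_subset (Set.union_subset_iff.mp hsub).1
  have hT : (e c, true) ∈ B := (hBcompat c).mp (hmono A B c hf hBcomplete hBcons hpos)
  exact hBcons.solution_of_mem_false hT (Set.mem_union_right _ (Set.mem_singleton _)) hsub

/-- monotonic EBL nogoods, containing only the positive input
literals and the negated replacement atom, are correct. -/
theorem monotonic_ebl_correct {α β : Type} (I : Set α) (e : β → α)
    (f : Set (Lit α) → β → Bool)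
    (hdep : ∀ (A B : Set (Lit α)) (c : β),
      (∀ l : Lit α, l.1 ∈ I → (l ∈ A ↔ l ∈ B)) → f A c = f B c)
    (hmono : ∀ (A B : Set (Lit α)) (c : β), f A c = true →
      Complete B → Consistent B → posP I A ⊆ posP I B → f B c = true)
    (Compatible : Set (Lit α) → Prop)
    (hCompat : ∀ B, Compatible B ↔
      (Complete B ∧ Consistent B ∧ ∀ c : β, (f B c = true ↔ (e c, true) ∈ B)))
    (A : Set (Lit α)) (hAcons : Consistent A) (c : β) (hf : f A c = true) :
    ∀ B, Compatible B →
      Solution B ((fun a => ((a, true) : Lit α)) '' posP I A ∪ {(e c, false)}) :=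
  monotonic_ebl_correct_general I e f hmono Compatible hCompat A c hf
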